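/- A finite poset is expressible if and only if it contains no four distinct elements a, b, c, d whose induced partial order is exactly a < b, c < b, c < d (with a, d incomparable, a, c incomparable, and b, d incomparable). -/

import Mathlib

open scoped NNReal

/-- The join of two posets: underlying set the disjoint union, with every
element of the first below every element of the second. -/
def Join (α β : Type) : Type := α ⊕ β

/-- Package a sum element as an element of the join. -/
def Join.mk {α β : Type} : α ⊕ β → Join α β := id

/-- Unpack an element of the join. -/
def Join.out {α β : Type} : Join α β → α ⊕ β := id

/-- The order relation of the join. -/
def joinLE {α β : Type} [LE α] [LE β] : α ⊕ β → α ⊕ β → Prop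
  | .inl a, .inl a' => a ≤ a'
  | .inr b, .inr b' => b ≤ b'
  | .inl _, .inr _ => True
  | .inr _, .inl _ => False

instance Join.instPartialOrder {α β : Type} [PartialOrder α] [PartialOrder β] :
    PartialOrder (Join α β) where
  le x y := joinLE (Join.out x) (Join.out y)
  le_refl x := by rcases hx : Join.out x with a | b <;> simp [hx, joinLE]
  le_trans x y z hxy hyz := by
    rcases hx : Join.out x with a | a <;> rcases hy : Join.out y with b | b <;>
      rcases hz : Join.out z with c | c <;>
      simp_all [joinLE] <;> exact le_trans hxy hyz
  le_antisymm x y hxy hyx := by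
    have : Join.out x = Join.out y := by
      rcases hx : Join.out x with a | a <;> rcases hy : Join.out y with b | b <;>
        simp_all [joinLE] <;> exact le_antisymm hxy hyx
    exact this

/-- The disjoint-union partial order on a sum type (no cross relations). -/
def disjOrder (α β : Type) [PartialOrder α] [PartialOrder β] : PartialOrder (α ⊕ β) :=
  inferInstance

/-- The class of expressible posets: generated from empty and singleton posets by
disjoint unions and joins, closed under order isomorphism. -/
inductive Expressible : ∀ (α : Type), PartialOrder α → Prop
  | empty (α : Type) [IsEmpty α] (o : PartialOrder α) : Expressible α o
  | single (α : Type) [Unique α] (o : PartialOrder α) : Expressible α o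
  | disj {α β : Type} [oa : PartialOrder α] [ob : PartialOrder β] :
      Expressible α oa → Expressible β ob → Expressible (α ⊕ β) (disjOrder α β)
  | join {α β : Type} [oa : PartialOrder α] [ob : PartialOrder β] :
      Expressible α oa → Expressible β ob → Expressible (Join α β) Join.instPartialOrder
  | iso {α β : Type} (oa : PartialOrder α) (ob : PartialOrder β) (e : α ≃ β)
      (he : ∀ x y, oa.le x y ↔ ob.le (e x) (e y)) :
      Expressible α oa → Expressible β ob

/-- The order relation of the zigzag poset `Z` on four elements `0,1,2,3`
(thought of as `a,b,c,d`): exactly `a < b`, `c < b`, `c < d`. -/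
abbrev ZLE : Fin 4 → Fin 4 → Prop := fun x y =>
  x = y ∨ (x = 0 ∧ y = 1) ∨ (x = 2 ∧ y = 1) ∨ (x = 2 ∧ y = 3)

theorem ZLE.refl : ∀ a, ZLE a a := by decide
theorem ZLE.trans : ∀ a b c, ZLE a b → ZLE b c → ZLE a c := by decide
theorem ZLE.antisymm : ∀ a b, ZLE a b → ZLE b a → a = b := by decide

/-- The zigzag poset `Z`. -/
def ZOrder : PartialOrder (Fin 4) where
  le := ZLE
  lt a b := ZLE a b ∧ ¬ ZLE b a
  lt_iff_le_not_ge _ _ := Iff.rfl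
  le_refl := ZLE.refl
  le_trans := ZLE.trans
  le_antisymm := ZLE.antisymm

/-- A poset admits no full embedding of the zigzag `Z`: there is no injective map
from `Z` that both preserves and reflects the order. -/
def NoZFullEmbedding (α : Type) [PartialOrder α] : Prop :=
  ¬ ∃ f : Fin 4 → α, Function.Injective f ∧ ∀ x y : Fin 4, ZLE x y ↔ f x ≤ f y

/-- Lexicographic substitution of the posets `Q i` into the poset `P`. -/
def SubstOrder {ι : Type} (P : PartialOrder ι) {β : ι → Type}
    (Q : ∀ i, PartialOrder (β i)) : PartialOrder (Σ i, β i) :=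
  letI := P
  letI : ∀ i, PartialOrder (β i) := Q
  inferInstanceAs (PartialOrder (Σₗ i, β i))

/-- The tropical dependence operation: maximal chain-sum of weights over a poset. -/
noncomputable def tropBox {ι : Type} (P : PartialOrder ι) (a : ι → ℝ≥0) : ℝ≥0 :=
  sSup {s : ℝ≥0 | ∃ l : List ι, l.Chain' (fun i j => P.lt i j) ∧ s = (l.map a).sum}

/-- The discrete partial order. -/
def discreteOrder (ι : Type) : PartialOrder ι where
  le x y := x = y
  le_refl _ := rfl
  le_trans _ _ _ h h' := Eq.trans h h'
  le_antisymm _ _ h _ := h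

/-- Connectivity of a poset: any two elements are joined by a zigzag of comparisons. -/
def PosetConnected (α : Type) [PartialOrder α] : Prop :=
  ∀ x y : α, Relation.ReflTransGen (fun u v : α => u ≤ v ∨ v ≤ u) x y


/-!
An induced `N` is connected both in its comparability graph and in its incomparability graph, so
it cannot straddle a disjoint union or a join: expressible posets are `N`-free.

Conversely, the comparability graph of an `N`-free poset has no induced path on four vertices, and
by Seinsche's theorem a finite `P₄`-free graph with two or more vertices is disconnected or has a
disconnected complement. In the first case the poset is a disjoint union of two smaller `N`-free
posets. In the second, let `A` be a component of the incomparability graph; every element outside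
`A` is comparable with all of `A`, and the direction of the comparison cannot change along an
incomparability edge, so it lies below all of `A` or above all of `A`. Cutting below or above `A`
writes the poset as a join of two smaller `N`-free posets, and induction on the size concludes.
-/

namespace SimpleGraph

variable {V : Type*} {G : SimpleGraph V}

def IsInducedP4 (G : SimpleGraph V) (a b c d : V) : Prop :=
  G.Adj a b ∧ G.Adj b c ∧ G.Adj c d ∧ Gᶜ.Adj a c ∧ Gᶜ.Adj a d ∧ Gᶜ.Adj b d

def P4Free (G : SimpleGraph V) : Prop :=
  ∀ a b c d, ¬ G.IsInducedP4 a b c d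

lemma IsInducedP4.of_compl {a b c d : V} (h : Gᶜ.IsInducedP4 a b c d) :
    G.IsInducedP4 c a d b := by
  obtain ⟨hab, hbc, hcd, hac, had, hbd⟩ := h
  rw [compl_compl] at hac had hbd
  exact ⟨hac.symm, had, hbd.symm, hcd, hbc.symm, hab⟩

lemma P4Free.compl (hG : G.P4Free) : Gᶜ.P4Free :=
  fun a b c d h => hG c a d b h.of_compl

lemma compl_induce (s : Set V) : (G.induce s)ᶜ = Gᶜ.induce s := by
  ext x y
  simp [Subtype.ext_iff]

lemma P4Free.induce (hG : G.P4Free) (s : Set V) : (G.induce s).P4Free := by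
  intro a b c d h
  rw [IsInducedP4, compl_induce] at h
  exact hG a b c d h

lemma Reachable.exists_adj_of_mem_of_notMem {S : Set V} {u v : V} (h : G.Reachable u v)
    (hu : u ∈ S) (hv : v ∉ S) : ∃ x ∈ S, ∃ y ∉ S, G.Adj x y := by
  obtain ⟨p⟩ := h
  obtain ⟨d, -, hd, hd'⟩ := p.exists_boundary_dart S hu hv
  exact ⟨_, hd, _, hd', d.adj⟩

variable {v : V}

lemma exists_adj_reachable_induce_compl_singleton (hG : G.Preconnected) (x : ({v}ᶜ : Set V)) :
    ∃ w : ({v}ᶜ : Set V), G.Adj v w ∧ (G.induce {v}ᶜ).Reachable x w := by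
  let S : Set V := {y | ∃ hy : y ≠ v, (G.induce {v}ᶜ).Reachable x ⟨y, hy⟩}
  obtain ⟨y, ⟨hyv, hxy⟩, z, hzS, hyz⟩ :=
    (hG x v).exists_adj_of_mem_of_notMem (S := S) ⟨x.2, .refl _⟩ (fun ⟨h, _⟩ => h rfl)
  by_cases hzv : z = v
  · subst hzv
    exact ⟨⟨y, hyv⟩, hyz.symm, hxy⟩
  · have hyz' : (G.induce {v}ᶜ).Adj ⟨y, hyv⟩ ⟨z, hzv⟩ := hyz
    exact absurd ⟨hzv, hxy.trans hyz'.reachable⟩ hzS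

/-- Removing a vertex with a non-neighbour keeps a connected `P₄`-free graph connected: otherwise
an edge `p - q` from a non-neighbour to a neighbour of `v`, and a neighbour `w` of `v` in another
component of `G - v`, would give the induced path `p - q - v - w`. -/
lemma P4Free.preconnected_induce_compl_singleton (hP4 : G.P4Free) (hG : G.Preconnected)
    {u : V} (hvu : Gᶜ.Adj v u) : (G.induce {v}ᶜ).Preconnected := by
  obtain ⟨p, hvp, q, hvq, hpq⟩ :=
    (hG u v).exists_adj_of_mem_of_notMem (S := {y | Gᶜ.Adj v y}) hvu (fun h => h.1 rfl)
  have hqv : q ≠ v := by rintro rfl; exact hvp.2 hpq.symm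
  replace hvq : G.Adj v q := by simpa [hqv.symm] using hvq
  let H := G.induce {v}ᶜ
  let p' : ({v}ᶜ : Set V) := ⟨p, hvp.1.symm⟩
  let q' : ({v}ᶜ : Set V) := ⟨q, hqv⟩
  have hqp : H.Adj q' p' := hpq.symm
  suffices hq' : ∀ s, H.Reachable q' s from fun x y => (hq' x).symm.trans (hq' y)
  intro s
  by_contra hs
  obtain ⟨w, hvw, hsw⟩ := exists_adj_reachable_induce_compl_singleton hG s
  have hfar (x : ({v}ᶜ : Set V)) (hx : H.Reachable q' x) : Gᶜ.Adj x w := by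
    refine ⟨fun h => hs ?_, fun h => hs ?_⟩
    · exact hx.trans ((Subtype.ext h : x = w) ▸ hsw.symm)
    · exact hx.trans ((Adj.reachable (G := H) h).trans hsw.symm)
  exact hP4 p q v w ⟨hpq, hvq.symm, hvw, hvp.symm, hfar p' hqp.reachable, hfar q' .rfl⟩

/-- Seinsche's theorem. -/
theorem P4Free.subsingleton_of_preconnected [Finite V] (hP4 : G.P4Free) (hG : G.Preconnected)
    (hGc : Gᶜ.Preconnected) : Subsingleton V := by
  induction V using Finite.induction_subsingleton_or_nontrivial with
  | hbase => assumption
  | hstep V IH =>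
    obtain ⟨v⟩ : Nonempty V := inferInstance
    obtain ⟨u₁, hu₁⟩ := hGc.exists_adj_of_nontrivial v
    obtain ⟨u₂, hu₂⟩ := hG.exists_adj_of_nontrivial v
    have hH := hP4.preconnected_induce_compl_singleton hG hu₁
    have hHc := hP4.compl.preconnected_induce_compl_singleton hGc (u := u₂)
      (by rwa [compl_compl])
    have : Subsingleton ({v}ᶜ : Set V) :=
      IH _ (Finite.card_subtype_lt (x := v) (by simp)) (hP4.induce _) hH
        (by rwa [compl_induce])
    have : u₁ = u₂ := congrArg Subtype.val
      (Subsingleton.elim (⟨u₁, hu₁.ne.symm⟩ : ({v}ᶜ : Set V)) ⟨u₂, hu₂.ne.symm⟩)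
    exact (hu₁.2 (this ▸ hu₂)).elim

end SimpleGraph

section NFree

variable {α β : Type*} [PartialOrder α] [PartialOrder β]

def IsInducedN (a b c d : α) : Prop :=
  a < b ∧ c < b ∧ c < d ∧
    IncompRel (· ≤ ·) a c ∧ IncompRel (· ≤ ·) a d ∧ IncompRel (· ≤ ·) b d

variable (α) in
def NFree : Prop :=
  ∀ a b c d : α, ¬ IsInducedN a b c d

lemma nFree_iff_not_exists : NFree α ↔
    ¬ ∃ a b c d : α, a ≠ b ∧ a ≠ c ∧ a ≠ d ∧ b ≠ c ∧ b ≠ d ∧ c ≠ d ∧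
      a < b ∧ c < b ∧ c < d ∧
      ¬ a ≤ c ∧ ¬ c ≤ a ∧ ¬ a ≤ d ∧ ¬ d ≤ a ∧ ¬ b ≤ d ∧ ¬ d ≤ b := by
  constructor
  · rintro hN ⟨a, b, c, d, -, -, -, -, -, -, hab, hcb, hcd, hac, hca, had, hda, hbd, hdb⟩
    exact hN a b c d ⟨hab, hcb, hcd, ⟨hac, hca⟩, ⟨had, hda⟩, ⟨hbd, hdb⟩⟩
  · rintro h a b c d ⟨hab, hcb, hcd, hac, had, hbd⟩
    exact h ⟨a, b, c, d, hab.ne, hac.ne, had.ne, hcb.ne', hbd.ne, hcd.ne,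
      hab, hcb, hcd, hac.1, hac.2, had.1, had.2, hbd.1, hbd.2⟩

lemma isInducedN_map_iff (f : α ↪o β) {a b c d : α} :
    IsInducedN (f a) (f b) (f c) (f d) ↔ IsInducedN a b c d := by
  simp [IsInducedN, IncompRel]

lemma NFree.of_orderEmbedding (f : α ↪o β) (h : NFree β) : NFree α :=
  fun _ _ _ _ hN => h _ _ _ _ ((isInducedN_map_iff f).mpr hN)

def OrderEmbedding.sumInl : α ↪o α ⊕ β :=
  ⟨⟨Sum.inl, Sum.inl_injective⟩, Sum.inl_le_inl_iff⟩

def OrderEmbedding.sumInr : β ↪o α ⊕ β :=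
  ⟨⟨Sum.inr, Sum.inr_injective⟩, Sum.inr_le_inr_iff⟩

lemma NFree.sum (hα : NFree α) (hβ : NFree β) : NFree (α ⊕ β) := by
  rintro (a | a) (b | b) (c | c) (d | d) h
  case inl.inl.inl.inl =>
    exact hα a b c d ((isInducedN_map_iff (OrderEmbedding.sumInl : α ↪o α ⊕ β)).mp h)
  case inr.inr.inr.inr =>
    exact hβ a b c d ((isInducedN_map_iff (OrderEmbedding.sumInr : β ↪o α ⊕ β)).mp h)
  all_goals obtain ⟨hab, hcb, hcd, -⟩ := h; simp at hab hcb hcd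

end NFree

section Join

variable {α β : Type} [PartialOrder α] [PartialOrder β]

def Join.inl : α ↪o Join α β :=
  ⟨⟨fun a => Join.mk (.inl a), Sum.inl_injective⟩, Iff.rfl⟩

def Join.inr : β ↪o Join α β :=
  ⟨⟨fun b => Join.mk (.inr b), Sum.inr_injective⟩, Iff.rfl⟩

lemma Join.not_incompRel_inl_inr (a : α) (b : β) :
    ¬ IncompRel (· ≤ ·) (inl a : Join α β) (inr b) :=
  fun h => h.1 trivial

lemma NFree.join (hα : NFree α) (hβ : NFree β) : NFree (Join α β) := by
  rintro (a | a) (b | b) (c | c) (d | d) h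
  case inl.inl.inl.inl => exact hα a b c d ((isInducedN_map_iff (Join.inl : α ↪o _)).mp h)
  case inr.inr.inr.inr => exact hβ a b c d ((isInducedN_map_iff (Join.inr : β ↪o _)).mp h)
  all_goals
    obtain ⟨-, -, -, hac, had, hbd⟩ := h
    first
      | exact Join.not_incompRel_inl_inr _ _ hac | exact Join.not_incompRel_inl_inr _ _ hac.symm
      | exact Join.not_incompRel_inl_inr _ _ had | exact Join.not_incompRel_inl_inr _ _ had.symm
      | exact Join.not_incompRel_inl_inr _ _ hbd | exact Join.not_incompRel_inl_inr _ _ hbd.symm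

end Join

theorem Expressible.nFree {α : Type} {o : PartialOrder α} (h : Expressible α o) :
    @NFree α o := by
  induction h with
  | empty α o => exact fun a => isEmptyElim a
  | single α o => exact fun a b _ _ h => h.1.ne (Subsingleton.elim a b)
  | disj _ _ ihα ihβ => exact ihα.sum ihβ
  | join _ _ ihα ihβ => exact ihα.join ihβ
  | iso oa ob e he _ ih =>
    let := oa
    let := ob
    exact ih.of_orderEmbedding (OrderIso.symm ⟨e, (he _ _).symm⟩).toOrderEmbedding

section Comparability

open SimpleGraph

variable {α : Type*}

def comparabilityGraph (α : Type*) [Preorder α] : SimpleGraph α :=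
  SimpleGraph.fromRel (· ≤ ·)

lemma compl_comparabilityGraph_adj [Preorder α] {a b : α} :
    (comparabilityGraph α)ᶜ.Adj a b ↔ IncompRel (· ≤ ·) a b := by
  rw [compl_adj, comparabilityGraph, fromRel_adj]
  by_cases hab : a = b
  · simp [hab, IncompRel]
  · simp [hab, IncompRel, not_or]

variable [PartialOrder α]

lemma NFree.p4Free_comparabilityGraph (hN : NFree α) : (comparabilityGraph α).P4Free := by
  rintro a b c d ⟨⟨hab, hab'⟩, ⟨hbc, hbc'⟩, ⟨hcd, hcd'⟩, hac, had, hbd⟩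
  rw [compl_comparabilityGraph_adj] at hac had hbd
  rcases hab' with hab' | hba'
  · have hcb : c < b := (hbc'.resolve_left fun h => hac.1 (hab'.trans h)).lt_of_ne hbc.symm
    have hcd : c < d := (hcd'.resolve_right fun h => hbd.2 (h.trans hcb.le)).lt_of_ne hcd
    exact hN a b c d ⟨hab'.lt_of_ne hab, hcb, hcd, hac, had, hbd⟩
  · have hbc : b < c := (hbc'.resolve_right fun h => hac.2 (h.trans hba')).lt_of_ne hbc
    have hdc : d < c := (hcd'.resolve_left fun h => hbd.1 (hbc.le.trans h)).lt_of_ne hcd.symm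
    exact hN d c b a ⟨hdc, hbc, hba'.lt_of_ne hab.symm, hbd.symm, had.symm, hac.symm⟩

lemma exists_incompRel_cut_of_not_preconnected (h : ¬ (comparabilityGraph α).Preconnected) :
    ∃ S : Set α, S.Nonempty ∧ Sᶜ.Nonempty ∧
      ∀ u ∈ S, ∀ w ∉ S, IncompRel (· ≤ ·) u w := by
  obtain ⟨x, y, hxy⟩ : ∃ x y, ¬ (comparabilityGraph α).Reachable x y := by
    simpa [Preconnected] using h
  refine ⟨{z | (comparabilityGraph α).Reachable x z}, ⟨x, .refl _⟩, ⟨y, hxy⟩, ?_⟩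
  intro u hu w hw
  rw [← compl_comparabilityGraph_adj, compl_adj]
  exact ⟨fun h => hw (h ▸ hu), fun h => hw (hu.trans h.reachable)⟩

lemma lt_or_gt_of_reachable_of_not_reachable {x z w : α}
    (hz : (comparabilityGraph α)ᶜ.Reachable x z)
    (hw : ¬ (comparabilityGraph α)ᶜ.Reachable x w) :
    z < w ∨ w < z := by
  rcases lt_or_eq_or_gt_or_incompRel z w with h | rfl | h | h
  · exact .inl h
  · exact absurd hz hw
  · exact .inr h
  · exact absurd (hz.trans (compl_comparabilityGraph_adj.mpr h).reachable) hw

lemma lt_of_reachable_of_not_reachable {x y w : α}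
    (hy : (comparabilityGraph α)ᶜ.Reachable x y)
    (hw : ¬ (comparabilityGraph α)ᶜ.Reachable x w)
    (hwx : w < x) : w < y := by
  rw [reachable_iff_reflTransGen] at hy
  induction hy with
  | refl => exact hwx
  | tail hxz hzy ih =>
    refine (lt_or_gt_of_reachable_of_not_reachable
      ((reachable_iff_reflTransGen _ _).mpr (hxz.tail hzy)) hw).resolve_left fun h => ?_
    exact (compl_comparabilityGraph_adj.mp hzy).not_gt (h.trans ih)

lemma exists_lt_cut_of_not_preconnected_compl (h : ¬ (comparabilityGraph α)ᶜ.Preconnected) :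
    ∃ L : Set α, L.Nonempty ∧ Lᶜ.Nonempty ∧ ∀ u ∈ L, ∀ w ∉ L, u < w := by
  obtain ⟨x, y, hxy⟩ : ∃ x y, ¬ (comparabilityGraph α)ᶜ.Reachable x y := by
    simpa [Preconnected] using h
  set A := {z | (comparabilityGraph α)ᶜ.Reachable x z}
  by_cases hbelow : ∃ w ∉ A, w < x
  · obtain ⟨w₀, hw₀, hw₀x⟩ := hbelow
    refine ⟨{z | z ∉ A ∧ z < x}, ⟨w₀, hw₀, hw₀x⟩, ⟨x, fun h => h.1 .rfl⟩, ?_⟩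
    rintro u ⟨hu, hux⟩ w hw
    by_cases hwA : w ∈ A
    · exact lt_of_reachable_of_not_reachable hwA hu hux
    · have hxw : x < w := (lt_or_gt_of_reachable_of_not_reachable (.refl x) hwA).resolve_right
        fun h => hw ⟨hwA, h⟩
      exact hux.trans hxw
  · push Not at hbelow
    refine ⟨A, ⟨x, .refl _⟩, ⟨y, hxy⟩, fun u hu w hw => ?_⟩
    refine (lt_or_gt_of_reachable_of_not_reachable hu hw).resolve_right fun hwu => ?_
    exact hbelow w hw (lt_of_reachable_of_not_reachable hu.symm (fun h => hw (hu.trans h)) hwu)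

end Comparability

section Cut

variable {α : Type} [PartialOrder α]

lemma expressible_of_incompRel_cut (S : Set α)
    (hS : ∀ u ∈ S, ∀ w ∉ S, IncompRel (· ≤ ·) u w)
    (h₁ : Expressible S inferInstance) (h₂ : Expressible ↥Sᶜ inferInstance) :
    Expressible α inferInstance := by
  classical
  refine .iso (disjOrder _ _) _ (Equiv.sumCompl (· ∈ S)) ?_ (.disj h₁ h₂)
  rintro (u | u) (w | w)
  · exact Sum.inl_le_inl_iff
  · exact iff_of_false Sum.not_inl_le_inr (hS u u.2 w w.2).1
  · exact iff_of_false Sum.not_inr_le_inl (hS w w.2 u u.2).2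
  · exact Sum.inr_le_inr_iff

lemma expressible_of_lt_cut (L : Set α) (hL : ∀ u ∈ L, ∀ w ∉ L, u < w)
    (h₁ : Expressible L inferInstance) (h₂ : Expressible ↥Lᶜ inferInstance) :
    Expressible α inferInstance := by
  classical
  refine .iso Join.instPartialOrder _
    (show Join L ↥Lᶜ ≃ α from Equiv.sumCompl (· ∈ L)) ?_ (.join h₁ h₂)
  rintro (u | u) (w | w)
  · exact Iff.rfl
  · exact iff_of_true trivial (hL u u.2 w w.2).le
  · exact iff_of_false id (hL w w.2 u u.2).not_ge
  · exact Iff.rfl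

end Cut

theorem NFree.expressible {α : Type} [Finite α] [PartialOrder α] (hN : NFree α) :
    Expressible α inferInstance := by
  revert hN
  refine Finite.induction_subsingleton_or_nontrivial
    (P := fun α => ∀ [PartialOrder α], NFree α → Expressible α inferInstance) α ?_ ?_
  · intro α _ _ _ _
    rcases isEmpty_or_nonempty α with _ | ⟨⟨a⟩⟩
    · exact .empty α _
    · exact @Expressible.single α (uniqueOfSubsingleton a) _
  · intro α _ _ IH _ hN
    have hsub (S : Set α) (hS : Sᶜ.Nonempty) : Expressible S inferInstance :=
      IH S (Finite.card_subtype_lt hS.some_mem) (hN.of_orderEmbedding (OrderEmbedding.subtype _))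
    have hsub' (S : Set α) (hS : S.Nonempty) : Expressible ↥Sᶜ inferInstance :=
      hsub Sᶜ (by rwa [compl_compl])
    have hdisc :
        ¬ (comparabilityGraph α).Preconnected ∨ ¬ (comparabilityGraph α)ᶜ.Preconnected :=
      not_and_or.mp fun ⟨h, hc⟩ =>
        not_subsingleton α (hN.p4Free_comparabilityGraph.subsingleton_of_preconnected h hc)
    rcases hdisc with h | h
    · obtain ⟨S, hS, hSc, hcut⟩ := exists_incompRel_cut_of_not_preconnected h
      exact expressible_of_incompRel_cut S hcut (hsub S hSc) (hsub' S hS)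
    · obtain ⟨L, hL, hLc, hcut⟩ := exists_lt_cut_of_not_preconnected_compl h
      exact expressible_of_lt_cut L hcut (hsub L hLc) (hsub' L hL)

/-- A finite poset is expressible iff it has no four distinct elements whose induced
order is exactly the zigzag `a < b`, `c < b`, `c < d`. -/
theorem expressible_iff_no_zigzag {α : Type} [Fintype α] (o : PartialOrder α) :
    Expressible α o ↔
      ¬ ∃ a b c d : α, a ≠ b ∧ a ≠ c ∧ a ≠ d ∧ b ≠ c ∧ b ≠ d ∧ c ≠ d ∧
        o.lt a b ∧ o.lt c b ∧ o.lt c d ∧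
        ¬ o.le a c ∧ ¬ o.le c a ∧ ¬ o.le a d ∧ ¬ o.le d a ∧
        ¬ o.le b d ∧ ¬ o.le d b := by
  let := o
  rw [← nFree_iff_not_exists]
  exact ⟨Expressible.nFree, NFree.expressible⟩
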